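/- arXiv:2404.16679 — 7 statements merged into one kernel-verified Lean document; each statement's English description precedes it below -/
import Mathlib

section
/- For every α ∈ (0, π/2), the point (p(α), q(α)) is the unique maximizer of the linear functional (p,q) ↦ p·cos α + q·sin α over the set {(p,q) ∈ ℝ² : K(p,q) = 0}. -/
/-!
Writing `d = p - q`, the relation `K p q = 0` says `p = γ d - d²/2` and `q = p - d`, so the zero set
of `K` is a parabola parametrised by `d`. Along it the functional `p cos α + q sin α` is the concave
quadratic `m d - t d²/2` with `t = cos α + sin α > 0` and `m = γ cos α - (1 - γ) sin α`, whose unique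
maximum is at `d = m / t`; this vertex is exactly the point `(p(α), q(α))`.
-/

open Real

lemma eq_of_half_sub_sq_add_eq_zero {γ p q : ℝ}
    (h : (1/2) * (p - q)^2 + (1 - γ) * p + γ * q = 0) :
    p = γ * (p - q) - (p - q)^2 / 2 := by
  linear_combination h

lemma mul_cos_add_mul_sin_of_eq {γ c s p q d : ℝ} (hp : p = γ * d - d^2 / 2) (hq : q = p - d) :
    p * c + q * s = (γ * c - (1 - γ) * s) * d - (c + s) * d^2 / 2 := by
  subst hq hp; ring

lemma mul_sub_mul_sq_eq_vertex_sub {t : ℝ} (ht : t ≠ 0) (m d : ℝ) :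
    m * d - t * d^2 / 2 = m * (m / t) - t * (m / t)^2 / 2 - t / 2 * (d - m / t)^2 := by
  field_simp; ring

lemma one_div_two_mul_one_add_inv_tan_sq {α : ℝ} (hα : α ∈ Set.Ioo 0 (π/2)) :
    1 / (2 * (1 + 1 / tan α)^2) = sin α^2 / (2 * (cos α + sin α)^2) := by
  have hc : cos α ≠ 0 := (cos_pos_of_mem_Ioo ⟨by linarith [hα.1, pi_pos], hα.2⟩).ne'
  have hs : sin α ≠ 0 := (sin_pos_of_pos_of_lt_pi hα.1 (by linarith [hα.2, pi_pos])).ne'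
  rw [tan_eq_sin_div_cos, add_comm (cos α)]
  field_simp

lemma one_div_two_mul_one_add_tan_sq {α : ℝ} (hα : α ∈ Set.Ioo 0 (π/2)) :
    1 / (2 * (1 + tan α)^2) = cos α^2 / (2 * (cos α + sin α)^2) := by
  have hc : cos α ≠ 0 := (cos_pos_of_mem_Ioo ⟨by linarith [hα.1, pi_pos], hα.2⟩).ne'
  rw [tan_eq_sin_div_cos]
  field_simp

section Vertex

variable {γ c s : ℝ} (ht : c + s ≠ 0)
include ht

lemma vertex_fst_eq :
    γ^2 / 2 - s^2 / (2 * (c + s)^2) =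
      γ * ((γ * c - (1 - γ) * s) / (c + s)) - ((γ * c - (1 - γ) * s) / (c + s))^2 / 2 := by
  field_simp; ring

lemma vertex_snd_eq :
    (1 - γ)^2 / 2 - c^2 / (2 * (c + s)^2) =
      (γ^2 / 2 - s^2 / (2 * (c + s)^2)) - (γ * c - (1 - γ) * s) / (c + s) := by
  field_simp; ring

end Vertex

theorem stmt_3_general (γ : ℝ)
    (K : ℝ → ℝ → ℝ) (hK : ∀ p q, K p q = (1/2) * (p - q)^2 + (1 - γ) * p + γ * q)
    (α : ℝ) (hα : α ∈ Set.Ioo 0 (π/2))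
    (pα qα : ℝ)
    (hpα : pα = γ^2/2 - 1/(2*(1 + 1/Real.tan α)^2))
    (hqα : qα = (1 - γ)^2/2 - 1/(2*(1 + Real.tan α)^2)) :
    (∀ p q : ℝ, K p q = 0 → p * Real.cos α + q * Real.sin α ≤ pα * Real.cos α + qα * Real.sin α) ∧
    (∀ p q : ℝ, K p q = 0 →
      p * Real.cos α + q * Real.sin α = pα * Real.cos α + qα * Real.sin α →
      p = pα ∧ q = qα) := by
  have ht : 0 < cos α + sin α := add_pos
    (cos_pos_of_mem_Ioo ⟨by linarith [hα.1, pi_pos], hα.2⟩)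
    (sin_pos_of_pos_of_lt_pi hα.1 (by linarith [hα.2, pi_pos]))
  rw [one_div_two_mul_one_add_inv_tan_sq hα] at hpα
  rw [one_div_two_mul_one_add_tan_sq hα] at hqα
  have hpα' := hpα.trans (vertex_fst_eq ht.ne')
  set d := (γ * cos α - (1 - γ) * sin α) / (cos α + sin α)
  have hqα' : qα = pα - d := by rw [hqα, vertex_snd_eq ht.ne', hpα]
  have hgap : ∀ p q, K p q = 0 → p * cos α + q * sin α =
      pα * cos α + qα * sin α - (cos α + sin α) / 2 * (p - q - d)^2 := by
    intro p q h
    rw [mul_cos_add_mul_sin_of_eq hpα' hqα', mul_cos_add_mul_sin_of_eq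
      (eq_of_half_sub_sq_add_eq_zero ((hK p q).symm.trans h)) (sub_sub_cancel p q).symm]
    exact mul_sub_mul_sq_eq_vertex_sub ht.ne' _ _
  refine ⟨fun p q h => ?_, fun p q h heq => ?_⟩
  · rw [hgap p q h]
    exact sub_le_self _ (by positivity)
  · have hd : p - q = d := by
      rw [hgap p q h, sub_eq_self, mul_eq_zero] at heq
      exact sub_eq_zero.mp (pow_eq_zero_iff two_ne_zero |>.mp (heq.resolve_left (by positivity)))
    have hp := eq_of_half_sub_sq_add_eq_zero ((hK p q).symm.trans h)
    rw [hd] at hp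
    exact ⟨hp.trans hpα'.symm, by linarith⟩

theorem stmt_3 (γ : ℝ) (hγ : γ ∈ Set.Ioo (0:ℝ) 1)
    (K : ℝ → ℝ → ℝ) (hK : ∀ p q, K p q = (1/2) * (p - q)^2 + (1 - γ) * p + γ * q)
    (α : ℝ) (hα : α ∈ Set.Ioo 0 (π/2))
    (pα qα : ℝ)
    (hpα : pα = γ^2/2 - 1/(2*(1 + 1/Real.tan α)^2))
    (hqα : qα = (1 - γ)^2/2 - 1/(2*(1 + Real.tan α)^2)) :
    (∀ p q : ℝ, K p q = 0 → p * Real.cos α + q * Real.sin α ≤ pα * Real.cos α + qα * Real.sin α) ∧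
    (∀ p q : ℝ, K p q = 0 →
      p * Real.cos α + q * Real.sin α = pα * Real.cos α + qα * Real.sin α →
      p = pα ∧ q = qα) :=
  stmt_3_general γ K hK α hα pα qα hpα hqα
end

section
/- Let (p₀, q₀) ∈ ℝ² with K(p₀, q₀) = 0 and define the sequence p_{2n} = p₀ + 2n(p₀−q₀) − 2n(n+γ), q_{2n} = q₀ + 2n(p₀−q₀) − 2n(n+γ−1) for n ∈ ℤ. Then K(p_{2n}, q_{2n}) = 0 for every n ∈ ℤ. -/
open Real

theorem stmt_6_general (γ : ℝ)
    (K : ℝ → ℝ → ℝ) (hK : ∀ p q, K p q = (1/2) * (p - q)^2 + (1 - γ) * p + γ * q)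
    (p₀ q₀ : ℝ) (h₀ : K p₀ q₀ = 0) (n : ℤ) :
    K (p₀ + 2*n*(p₀ - q₀) - 2*n*(n + γ)) (q₀ + 2*n*(p₀ - q₀) - 2*n*(n + γ - 1)) = 0 := by
  rw [hK] at h₀ ⊢
  -- A polynomial identity: the shift preserves K exactly, for real as well as integer n.
  linear_combination h₀

theorem stmt_6 (γ : ℝ) (hγ : γ ∈ Set.Ioo (0:ℝ) 1)
    (K : ℝ → ℝ → ℝ) (hK : ∀ p q, K p q = (1/2) * (p - q)^2 + (1 - γ) * p + γ * q)
    (p₀ q₀ : ℝ) (h₀ : K p₀ q₀ = 0) (n : ℤ) :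
    K (p₀ + 2*n*(p₀ - q₀) - 2*n*(n + γ)) (q₀ + 2*n*(p₀ - q₀) - 2*n*(n + γ - 1)) = 0 :=
  stmt_6_general γ K hK p₀ q₀ h₀ n
end

section
/- Let (p₀, q₀) be a zero of K, and define p_{2n} = p₀ + 2n(p₀−q₀) − 2n(n+γ), q_{2n} = q₀ + 2n(p₀−q₀) − 2n(n+γ−1), and the interlaced points (p_{2n+1}, q_{2n+1}) := (p_{2n}, q_{2n+2}). Then K(p_{2n+1}, q_{2n+1}) = 0 for every n ∈ ℤ, i.e. K(p_{2n}, q_{2n+2}) = 0. -/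
open Real

theorem stmt_7_general (γ : ℝ)
    (K : ℝ → ℝ → ℝ) (hK : ∀ p q, K p q = (1/2) * (p - q)^2 + (1 - γ) * p + γ * q)
    (p₀ q₀ : ℝ) (h₀ : K p₀ q₀ = 0)
    (p2 q2 : ℤ → ℝ)
    (hp2 : ∀ n : ℤ, p2 n = p₀ + 2*n*(p₀ - q₀) - 2*n*(n + γ))
    (hq2 : ∀ n : ℤ, q2 n = q₀ + 2*n*(p₀ - q₀) - 2*n*(n + γ - 1)) (n : ℤ) :
    K (p2 n) (q2 (n + 1)) = 0 := by
  rw [hK] at h₀ ⊢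
  rw [hp2, hq2]
  push_cast
  -- `p2 n - q2 (n + 1) = 2 (n + γ) - (p₀ - q₀)`, so `K (p2 n) (q2 (n + 1)) - K p₀ q₀` vanishes identically.
  linear_combination h₀

theorem stmt_7 (γ : ℝ) (hγ : γ ∈ Set.Ioo (0:ℝ) 1)
    (K : ℝ → ℝ → ℝ) (hK : ∀ p q, K p q = (1/2) * (p - q)^2 + (1 - γ) * p + γ * q)
    (p₀ q₀ : ℝ) (h₀ : K p₀ q₀ = 0)
    (p2 q2 : ℤ → ℝ)
    (hp2 : ∀ n : ℤ, p2 n = p₀ + 2*n*(p₀ - q₀) - 2*n*(n + γ))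
    (hq2 : ∀ n : ℤ, q2 n = q₀ + 2*n*(p₀ - q₀) - 2*n*(n + γ - 1)) (n : ℤ) :
    K (p2 n) (q2 (n + 1)) = 0 :=
  stmt_7_general γ K hK p₀ q₀ h₀ p2 q2 hp2 hq2 n
end

section
/- Starting from (p₀,q₀) = (0,0) (which is a zero of K since K(0,0)=0), the coefficients in the sequence satisfy p_{2n} = −2n(n+γ) and q_{2n} = −2n(n+γ−1), and the alternating sum ∑_{n∈ℤ} (−1)ⁿ exp(pₙx₀ + qₙy₀), with (p_{2n+1},q_{2n+1}) = (p_{2n},q_{2n+2}), equals 2·∑_{n∈ℤ} sinh((2n+γ)y₀)·exp(−2n(n+γ)t₀ − γy₀), where t₀ = x₀ + y₀. -/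
/-!
Split the sum over `n ∈ ℤ` into even `n = 2m` and odd `n = 2m + 1`. With `t₀ = x₀ + y₀` the
exponents become `-2m(m+γ)t₀ - γy₀ ± (2m+γ)y₀`, so the `m`-th even term minus the `m`-th odd term is
`2 sinh((2m+γ)y₀) exp(-2m(m+γ)t₀ - γy₀)`. All these series are Gaussian in `m`, hence converge
absolutely because `t₀ > 0`.
-/

open Real

theorem HasSum.int_even_add_odd {M : Type*} [AddCommMonoid M] [TopologicalSpace M]
    [ContinuousAdd M] {f : ℤ → M} {a b : M} (he : HasSum (fun m : ℤ ↦ f (2 * m)) a)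
    (ho : HasSum (fun m : ℤ ↦ f (2 * m + 1)) b) : HasSum f (a + b) := by
  have h2 := mul_right_injective₀ (two_ne_zero' ℤ)
  replace ho := ((add_left_injective 1).comp h2).hasSum_range_iff.2 ho
  refine (h2.hasSum_range_iff.2 he).add_isCompl ?_ ho
  simpa [Function.comp_def] using Int.isCompl_even_odd

theorem summable_exp_neg_mul_sq_add_mul {a : ℝ} (ha : 0 < a) (b c : ℝ) :
    Summable fun m : ℤ ↦ exp (-a * m ^ 2 + b * m + c) := by
  -- the Jacobi theta bound: `∑ exp (-π (T n² - 2 S |n|))` converges for `T > 0`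
  have h := summable_pow_mul_jacobiTheta₂_term_bound (|b| / (2 * π)) (div_pos ha pi_pos) 0
  simp only [pow_zero, one_mul, Int.cast_abs] at h
  refine (h.mul_right (exp c)).of_nonneg_of_le (fun m ↦ (exp_pos _).le) fun m ↦ ?_
  rw [← exp_add, exp_le_exp, add_le_add_iff_right]
  have hbm : b * m ≤ |b| * |(m : ℝ)| := (le_abs_self _).trans (abs_mul _ _).le
  calc -a * m ^ 2 + b * m ≤ -a * m ^ 2 + |b| * |(m : ℝ)| := by linarith
    _ = -π * (a / π * m ^ 2 - 2 * (|b| / (2 * π)) * |(m : ℝ)|) := by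
      field_simp [pi_ne_zero]; ring

theorem two_mul_sinh_mul_exp (u v : ℝ) : 2 * sinh u * exp v = exp (v + u) - exp (v - u) := by
  rw [sinh_eq, exp_add, exp_sub, exp_neg]
  field_simp

theorem stmt_9_general (γ x₀ y₀ t₀ : ℝ)
    (hx₀ : 0 < x₀) (hy₀ : 0 < y₀) (ht₀ : t₀ = x₀ + y₀)
    (p q : ℤ → ℝ)
    (hpe : ∀ m : ℤ, p (2*m) = -2*m*(m + γ))
    (hqe : ∀ m : ℤ, q (2*m) = -2*m*(m + γ - 1))
    (hpo : ∀ m : ℤ, p (2*m + 1) = p (2*m))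
    (hqo : ∀ m : ℤ, q (2*m + 1) = q (2*m + 2)) :
    ∑' n : ℤ, (-1 : ℝ)^n * Real.exp (p n * x₀ + q n * y₀)
      = 2 * ∑' n : ℤ, Real.sinh ((2*n + γ) * y₀) * Real.exp (-2*n*(n + γ)*t₀ - γ*y₀) := by
  have ht : 0 < 2 * t₀ := by linarith
  set v : ℤ → ℝ := fun m ↦ -2*m*(m + γ)*t₀ - γ*y₀
  set u : ℤ → ℝ := fun m ↦ (2*m + γ)*y₀
  have hsum_even : Summable fun m ↦ exp (v m + u m) := by
    convert summable_exp_neg_mul_sq_add_mul ht (2*y₀ - 2*γ*t₀) 0 using 3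
    simp only [v, u]; ring
  have hsum_odd : Summable fun m ↦ exp (v m - u m) := by
    convert summable_exp_neg_mul_sq_add_mul ht (-2*y₀ - 2*γ*t₀) (-2*γ*y₀) using 3
    simp only [v, u]; ring
  have heven (m : ℤ) :
      (-1 : ℝ)^(2*m) * exp (p (2*m) * x₀ + q (2*m) * y₀) = exp (v m + u m) := by
    rw [(even_two_mul m).neg_one_zpow, one_mul, hpe, hqe]
    simp only [v, u, ht₀]
    congr 1
    ring
  have hodd (m : ℤ) :
      (-1 : ℝ)^(2*m + 1) * exp (p (2*m + 1) * x₀ + q (2*m + 1) * y₀) = -exp (v m - u m) := by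
    rw [(odd_two_mul_add_one m).neg_one_zpow, neg_one_mul, hpo, hpe, hqo,
      show 2*m + 2 = 2*(m + 1) by ring, hqe]
    simp only [v, u, ht₀]
    push_cast
    congr 2
    ring
  have hLHS : HasSum (fun n : ℤ ↦ (-1 : ℝ)^n * exp (p n * x₀ + q n * y₀))
      (∑' m, exp (v m + u m) + -∑' m, exp (v m - u m)) :=
    HasSum.int_even_add_odd (hsum_even.hasSum.congr_fun heven)
      (hsum_odd.hasSum.neg.congr_fun hodd)
  have hRHS : HasSum (fun m ↦ 2 * (sinh (u m) * exp (v m)))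
      (∑' m, exp (v m + u m) - ∑' m, exp (v m - u m)) :=
    (hsum_even.hasSum.sub hsum_odd.hasSum).congr_fun fun m ↦ by
      rw [← mul_assoc, two_mul_sinh_mul_exp]
  rw [hLHS.tsum_eq, ← tsum_mul_left, hRHS.tsum_eq, sub_eq_add_neg]

theorem stmt_9 (γ x₀ y₀ t₀ : ℝ) (hγ : γ ∈ Set.Ioo (0:ℝ) 1)
    (hx₀ : 0 < x₀) (hy₀ : 0 < y₀) (ht₀ : t₀ = x₀ + y₀)
    (p q : ℤ → ℝ)
    (hpe : ∀ m : ℤ, p (2*m) = -2*m*(m + γ))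
    (hqe : ∀ m : ℤ, q (2*m) = -2*m*(m + γ - 1))
    (hpo : ∀ m : ℤ, p (2*m + 1) = p (2*m))
    (hqo : ∀ m : ℤ, q (2*m + 1) = q (2*m + 2)) :
    ∑' n : ℤ, (-1 : ℝ)^n * Real.exp (p n * x₀ + q n * y₀)
      = 2 * ∑' n : ℤ, Real.sinh ((2*n + γ) * y₀) * Real.exp (-2*n*(n + γ)*t₀ - γ*y₀) :=
  stmt_9_general γ x₀ y₀ t₀ hx₀ hy₀ ht₀ p q hpe hqe hpo hqo
end

section
/- For γ ∈ (0,1), x₀ > 0, y₀ > 0, t₀ = x₀+y₀, the two series expressions for the persistence probability agree: 2·∑_{n∈ℤ} sinh((2n+γ)y₀)·exp(−2n(n+γ)t₀ − γy₀) = 2·∑_{n∈ℤ} sinh(γ(y₀+2nt₀))·exp(−2(ny₀ + n²t₀) − γy₀). -/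
open Real

/-
Writing each `sinh` as a difference of exponentials splits both series into the same two
Gaussian theta-type series `∑ f n` and `∑ g n`, except that `f` appears as `n ↦ f (-n)` on the
right-hand side. Since `t₀ > 0`, both series converge, so they can be separated, and the
reflection `n ↦ -n` of `ℤ` does not change `∑ f n`.
-/

lemma summable_exp_neg_mul_sq_add_mul_int {a : ℝ} (ha : 0 < a) (b : ℝ) :
    Summable fun n : ℤ => exp (-a * n ^ 2 + b * n) := by
  -- the term is `‖jacobiTheta₂_term n z τ‖` for `τ = i a / π`, `z = -i b / (2π)`
  have hτ : 0 < ((a / π : ℝ) * Complex.I).im := by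
    simp [div_pos ha pi_pos]
  have h := (summable_jacobiTheta₂_term_iff ((-b / (2 * π) : ℝ) * Complex.I) _).mpr hτ
  rw [← summable_norm_iff] at h
  convert h using 2 with n
  rw [norm_jacobiTheta₂_term]
  congr 1
  simp only [Complex.mul_I_im, Complex.ofReal_re]
  field_simp
  ring

lemma tsum_comp_neg_sub {α β : Type*} [AddCommGroup α] [TopologicalSpace α]
    [IsTopologicalAddGroup α] [T2Space α] [InvolutiveNeg β] {f g : β → α}
    (hf : Summable f) (hg : Summable g) :
    ∑' n, (f (-n) - g n) = ∑' n, (f n - g n) := by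
  have hf' : Summable fun n => f (-n) := (Equiv.neg β).summable_iff.mpr hf
  rw [hf'.tsum_sub hg, hf.tsum_sub hg, tsum_comp_neg f]

lemma sinh_mul_exp_eq_sub_left (n γ y t : ℝ) :
    sinh ((2 * n + γ) * y) * exp (-2 * n * (n + γ) * t - γ * y) =
      (exp (-(2 * t) * n ^ 2 + (2 * y - 2 * γ * t) * n)
        - exp (-2 * γ * y) * exp (-(2 * t) * n ^ 2 + (-2 * y - 2 * γ * t) * n)) / 2 := by
  rw [sinh_eq, div_mul_eq_mul_div, sub_mul, ← exp_add, ← exp_add, ← exp_add]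
  congr 2 <;> ring_nf

lemma sinh_mul_exp_eq_sub_right (n γ y t : ℝ) :
    sinh (γ * (y + 2 * n * t)) * exp (-2 * (n * y + n ^ 2 * t) - γ * y) =
      (exp (-(2 * t) * (-n) ^ 2 + (2 * y - 2 * γ * t) * (-n))
        - exp (-2 * γ * y) * exp (-(2 * t) * n ^ 2 + (-2 * y - 2 * γ * t) * n)) / 2 := by
  rw [sinh_eq, div_mul_eq_mul_div, sub_mul, ← exp_add, ← exp_add, ← exp_add]
  congr 2 <;> ring_nf

theorem stmt_10_general (γ x₀ y₀ t₀ : ℝ)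
    (hx₀ : 0 < x₀) (hy₀ : 0 < y₀) (ht₀ : t₀ = x₀ + y₀) :
    2 * ∑' n : ℤ, Real.sinh ((2*n + γ) * y₀) * Real.exp (-2*n*(n + γ)*t₀ - γ*y₀)
      = 2 * ∑' n : ℤ, Real.sinh (γ * (y₀ + 2*n*t₀)) * Real.exp (-2*(n*y₀ + n^2*t₀) - γ*y₀) := by
  have ht : 0 < 2 * t₀ := by linarith
  set f : ℤ → ℝ := fun n => exp (-(2 * t₀) * n ^ 2 + (2 * y₀ - 2 * γ * t₀) * n)
  set g : ℤ → ℝ := fun n =>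
    exp (-2 * γ * y₀) * exp (-(2 * t₀) * n ^ 2 + (-2 * y₀ - 2 * γ * t₀) * n)
  have hf : Summable f := summable_exp_neg_mul_sq_add_mul_int ht _
  have hg : Summable g := (summable_exp_neg_mul_sq_add_mul_int ht _).mul_left _
  calc _ = 2 * ∑' n : ℤ, (f n - g n) / 2 :=
        congrArg _ (tsum_congr fun n => sinh_mul_exp_eq_sub_left n γ y₀ t₀)
    _ = 2 * ∑' n : ℤ, (f (-n) - g n) / 2 := by
        rw [tsum_div_const, tsum_div_const, tsum_comp_neg_sub hf hg]
    _ = _ := by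
        refine congrArg _ (tsum_congr fun n => ?_)
        simp only [f, g, Int.cast_neg]
        exact (sinh_mul_exp_eq_sub_right n γ y₀ t₀).symm

theorem stmt_10 (γ x₀ y₀ t₀ : ℝ) (hγ : γ ∈ Set.Ioo (0:ℝ) 1)
    (hx₀ : 0 < x₀) (hy₀ : 0 < y₀) (ht₀ : t₀ = x₀ + y₀) :
    2 * ∑' n : ℤ, Real.sinh ((2*n + γ) * y₀) * Real.exp (-2*n*(n + γ)*t₀ - γ*y₀)
      = 2 * ∑' n : ℤ, Real.sinh (γ * (y₀ + 2*n*t₀)) * Real.exp (-2*(n*y₀ + n^2*t₀) - γ*y₀) :=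
  stmt_10_general γ x₀ y₀ t₀ hx₀ hy₀ ht₀
end

section
/- For α ∈ (0, π/2), the second derivative in q of G(q, α) := P⁺(q)cos α + q sin α, evaluated at q = q(α), equals −(cos α + sin α)³ / cos²α; in particular it is strictly negative. -/
/-! At `q(α)` the square root `√((1 - γ)² - 2q)` equals `1 / (1 + tan α)`, and the second derivative
of `P⁺` is `-(√((1 - γ)² - 2q))⁻³`; multiplying by `cos α` and writing
`1 + tan α = (cos α + sin α) / cos α` gives the closed form. -/

open Real

section SqrtSubTwoMul

variable {c q : ℝ}

lemma hasDerivAt_sqrt_sub_two_mul (hq : 2 * q < c) :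
    HasDerivAt (fun x => √(c - 2 * x)) (-(√(c - 2 * q))⁻¹) q := by
  have hpos : 0 < √(c - 2 * q) := sqrt_pos.mpr (by linarith)
  have hlin : HasDerivAt (fun x : ℝ => c - 2 * x) (-2) q := by
    simpa using ((hasDerivAt_id q).const_mul 2).const_sub c
  exact ((hasDerivAt_sqrt (by linarith : c - 2 * q ≠ 0)).comp q hlin).congr_deriv
    (by field_simp)

lemma hasDerivAt_inv_sqrt_sub_two_mul (hq : 2 * q < c) :
    HasDerivAt (fun x => (√(c - 2 * x))⁻¹) ((√(c - 2 * q))⁻¹ ^ 3) q := by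
  have hpos : 0 < √(c - 2 * q) := sqrt_pos.mpr (by linarith)
  exact ((hasDerivAt_sqrt_sub_two_mul hq).inv hpos.ne').congr_deriv (by field_simp)

variable (a k m : ℝ)

lemma deriv_affine_add_sqrt_sub_two_mul (hq : 2 * q < c) :
    deriv (fun x => (a + x + √(c - 2 * x)) * k + x * m) q = (1 - (√(c - 2 * q))⁻¹) * k + m := by
  have h : HasDerivAt (fun x => (a + x + √(c - 2 * x)) * k + x * m)
      ((1 + -(√(c - 2 * q))⁻¹) * k + 1 * m) q :=
    ((((hasDerivAt_id' q).const_add a).add (hasDerivAt_sqrt_sub_two_mul hq)).mul_const k).add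
      ((hasDerivAt_id' q).mul_const m)
  exact h.deriv.trans (by ring)

lemma deriv_deriv_affine_add_sqrt_sub_two_mul (hq : 2 * q < c) :
    deriv (deriv fun x => (a + x + √(c - 2 * x)) * k + x * m) q = -k * (√(c - 2 * q))⁻¹ ^ 3 := by
  have hderiv : deriv (fun x => (a + x + √(c - 2 * x)) * k + x * m) =ᶠ[nhds q]
      fun x => (1 - (√(c - 2 * x))⁻¹) * k + m := by
    filter_upwards [isOpen_Iio.mem_nhds (show q < c / 2 by linarith)] with x hx
    exact deriv_affine_add_sqrt_sub_two_mul a k m (by linarith [Set.mem_Iio.mp hx])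
  rw [hderiv.deriv_eq]
  exact ((((hasDerivAt_inv_sqrt_sub_two_mul hq).const_sub 1).mul_const k).add_const m).deriv.trans
    (by ring)

end SqrtSubTwoMul

lemma one_add_tan_eq_div {α : ℝ} (hα : cos α ≠ 0) : 1 + tan α = (cos α + sin α) / cos α := by
  rw [tan_eq_sin_div_cos]
  field_simp

theorem stmt_14_general (γ : ℝ)
    (α : ℝ) (hα : α ∈ Set.Ioo 0 (π/2))
    (G : ℝ → ℝ)
    (hG : ∀ q, G q = (γ - 1 + q + Real.sqrt ((1 - γ)^2 - 2*q)) * Real.cos α + q * Real.sin α)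
    (qα : ℝ) (hqα : qα = (1 - γ)^2/2 - 1/(2*(1 + Real.tan α)^2)) :
    deriv (deriv G) qα = -(Real.cos α + Real.sin α)^3 / (Real.cos α)^2 ∧
    deriv (deriv G) qα < 0 := by
  obtain ⟨hα0, hαπ⟩ := hα
  have hcos : 0 < cos α := cos_pos_of_mem_Ioo ⟨by linarith [pi_pos], hαπ⟩
  have hsin : 0 < sin α := sin_pos_of_pos_of_lt_pi hα0 (by linarith)
  have htan : 1 + tan α = (cos α + sin α) / cos α := one_add_tan_eq_div hcos.ne'
  have hradicand : (1 - γ) ^ 2 - 2 * qα = (cos α / (cos α + sin α)) ^ 2 := by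
    rw [hqα, htan]
    field_simp
    ring
  have hsqrt : √((1 - γ) ^ 2 - 2 * qα) = cos α / (cos α + sin α) := by
    rw [hradicand, sqrt_sq (by positivity)]
  have hq : 2 * qα < (1 - γ) ^ 2 := by
    have : 0 < (1 - γ) ^ 2 - 2 * qα := hradicand ▸ by positivity
    linarith
  have hval : deriv (deriv G) qα = -(cos α + sin α) ^ 3 / cos α ^ 2 := by
    rw [funext hG, deriv_deriv_affine_add_sqrt_sub_two_mul _ _ _ hq, hsqrt]
    field_simp
  exact ⟨hval, hval ▸ div_neg_of_neg_of_pos (by simp only [neg_neg_iff_pos]; positivity)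
    (by positivity)⟩

theorem stmt_14 (γ : ℝ) (hγ : γ ∈ Set.Ioo (0:ℝ) 1)
    (α : ℝ) (hα : α ∈ Set.Ioo 0 (π/2))
    (G : ℝ → ℝ)
    (hG : ∀ q, G q = (γ - 1 + q + Real.sqrt ((1 - γ)^2 - 2*q)) * Real.cos α + q * Real.sin α)
    (qα : ℝ) (hqα : qα = (1 - γ)^2/2 - 1/(2*(1 + Real.tan α)^2)) :
    deriv (deriv G) qα = -(Real.cos α + Real.sin α)^3 / (Real.cos α)^2 ∧
    deriv (deriv G) qα < 0 :=
  stmt_14_general γ α hα G hG qα hqα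
end

section
/- For a > 0, b > 0, t₀ ≥ 0, the function g(y) := (b/√(2π)) · (y−t₀)^{−3/2} · exp(−(1/2)(a(y−t₀) + b²/(y−t₀))) for y > t₀ (and 0 otherwise) satisfies ∫_0^∞ g(t₀+s) e^{q(t₀+s)} ds = exp(−b√(a−2q) + q t₀) for all real q < a/2. -/
open Real MeasureTheory Set


lemma hInt (k : ℝ) : IntegrableOn (fun x : ℝ => Real.exp (-x^2 - k^2/x^2)) (Ioi 0) := by
  have h : Integrable (fun x : ℝ => Real.exp (-1 * x^2)) := integrable_exp_neg_mul_sq one_pos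
  refine ((h.restrict (s := Ioi 0)).mono ?_ ?_)
  · apply Measurable.aestronglyMeasurable; fun_prop
  · filter_upwards with x
    rw [Real.norm_eq_abs, Real.norm_eq_abs, abs_of_pos (Real.exp_pos _), abs_of_pos (Real.exp_pos _)]
    apply Real.exp_le_exp.2
    have : 0 ≤ k^2/x^2 := by positivity
    nlinarith

lemma J (k : ℝ) (hk : 0 < k) :
    ∫ x in Ioi (0:ℝ), Real.exp (-x^2 - k^2/x^2) = Real.sqrt π / 2 * Real.exp (-2*k) := by
  have hderiv : ∀ x ∈ Ioi (0:ℝ), HasDerivWithinAt (fun x => x - k/x) (1 + k/x^2) (Ioi 0) x := by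
    intro x hx
    have hx0 : x ≠ 0 := (mem_Ioi.1 hx).ne'
    have h1 : HasDerivAt (fun y : ℝ => y - k / y) (1 - k * (-(x^2)⁻¹)) x := by
      simpa [div_eq_mul_inv] using (hasDerivAt_id' x).fun_sub ((hasDerivAt_inv hx0).const_mul k)
    have h2 : 1 - k * (-(x^2)⁻¹) = 1 + k/x^2 := by field_simp; ring
    exact h2 ▸ h1.hasDerivWithinAt
  have hinj : InjOn (fun x : ℝ => x - k/x) (Ioi 0) := by
    apply StrictMonoOn.injOn
    intro x hx y hy hxy
    have hx0 : (0:ℝ) < x := hx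
    have hy0 : (0:ℝ) < y := hy
    have : k/y < k/x := div_lt_div_of_pos_left hk hx0 hxy
    simp only
    linarith
  have himg : (fun x : ℝ => x - k/x) '' Ioi 0 = univ := by
    apply eq_univ_of_forall
    intro u
    set s := Real.sqrt (u^2 + 4*k) with hs
    have hs2 : s^2 = u^2 + 4*k := Real.sq_sqrt (by positivity)
    have hsu : |u| < s := by
      rw [← Real.sqrt_sq_eq_abs]
      apply Real.sqrt_lt_sqrt (sq_nonneg u)
      linarith
    have h1 : -u < s := lt_of_le_of_lt (neg_le_abs u) hsu
    have hxpos : 0 < (u + s)/2 := by linarith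
    refine ⟨(u + s)/2, hxpos, ?_⟩
    have hne : u + s ≠ 0 := by linarith
    field_simp
    nlinarith [hs2]
  have key := integral_image_eq_integral_abs_deriv_smul measurableSet_Ioi hderiv hinj
      (fun u => Real.exp (-u^2))
  rw [himg] at key
  have hgauss : ∫ u : ℝ in univ, Real.exp (-u^2) = Real.sqrt π := by
    rw [Measure.restrict_univ]
    simpa using integral_gaussian 1
  rw [hgauss] at key
  have hrw : ∀ x ∈ Ioi (0:ℝ),
      |1 + k/x^2| • Real.exp (-((fun x => x - k/x) x)^2)
        = Real.exp (2*k) * (Real.exp (-x^2 - k^2/x^2) + k/x^2 * Real.exp (-x^2 - k^2/x^2)) := by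
    intro x hx
    have hx0 : (0:ℝ) < x := hx
    have h1 : (0:ℝ) < 1 + k/x^2 := by positivity
    rw [abs_of_pos h1, smul_eq_mul]
    have hexp : Real.exp (-(x - k/x)^2) = Real.exp (2*k) * Real.exp (-x^2 - k^2/x^2) := by
      rw [← Real.exp_add]
      congr 1
      field_simp
      ring
    rw [hexp]; ring
  rw [setIntegral_congr_fun measurableSet_Ioi hrw] at key
  have hderiv2 : ∀ x ∈ Ioi (0:ℝ), HasDerivWithinAt (fun x => k/x) (-(k/x^2)) (Ioi 0) x := by
    intro x hx
    have hx0 : x ≠ 0 := (mem_Ioi.1 hx).ne'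
    have h1 : HasDerivAt (fun y : ℝ => k / y) (k * (-(x^2)⁻¹)) x := by
      simpa [div_eq_mul_inv] using (hasDerivAt_inv hx0).const_mul k
    have h2 : k * (-(x^2)⁻¹) = -(k/x^2) := by field_simp
    exact h2 ▸ h1.hasDerivWithinAt
  have hinj2 : InjOn (fun x : ℝ => k/x) (Ioi 0) := by
    intro x hx y hy h
    have hx0 : (0:ℝ) < x := hx
    have hy0 : (0:ℝ) < y := hy
    field_simp at h
    rcases h with h | h
    · linarith
  have himg2 : (fun x : ℝ => k/x) '' Ioi 0 = Ioi 0 := by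
    ext u
    constructor
    · rintro ⟨x, hx, rfl⟩; exact div_pos hk hx
    · intro hu; exact ⟨k/u, div_pos hk hu, by field_simp⟩
  have key2 := integral_image_eq_integral_abs_deriv_smul measurableSet_Ioi hderiv2 hinj2
      (fun x => Real.exp (-x^2 - k^2/x^2))
  rw [himg2] at key2
  have hrw2 : ∀ x ∈ Ioi (0:ℝ),
      |(-(k/x^2))| • Real.exp (-((fun x => k/x) x)^2 - k^2/((fun x => k/x) x)^2)
        = k/x^2 * Real.exp (-x^2 - k^2/x^2) := by
    intro x hx
    have hx0 : (0:ℝ) < x := hx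
    rw [abs_neg, abs_of_pos (by positivity), smul_eq_mul]
    congr 2
    have hk0 : k ≠ 0 := hk.ne'
    field_simp
    ring
  rw [setIntegral_congr_fun measurableSet_Ioi hrw2] at key2
  have hInt2 : IntegrableOn (fun x : ℝ => k/x^2 * Real.exp (-x^2 - k^2/x^2)) (Ioi 0) := by
    have hiff := (integrableOn_image_iff_integrableOn_abs_deriv_smul measurableSet_Ioi hderiv2 hinj2
      (fun x => Real.exp (-x^2 - k^2/x^2)))
    rw [himg2] at hiff
    refine (hiff.1 (hInt k)).congr_fun (fun x hx => ?_) measurableSet_Ioi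
    simpa using hrw2 x hx
  have hsplit : ∫ x in Ioi (0:ℝ),
      Real.exp (2*k) * (Real.exp (-x^2 - k^2/x^2) + k/x^2 * Real.exp (-x^2 - k^2/x^2))
      = Real.exp (2*k) * ((∫ x in Ioi (0:ℝ), Real.exp (-x^2 - k^2/x^2))
          + ∫ x in Ioi (0:ℝ), k/x^2 * Real.exp (-x^2 - k^2/x^2)) := by
    rw [integral_const_mul, integral_add (hInt k) hInt2]
  rw [hsplit, ← key2] at key
  have hek : (0:ℝ) < Real.exp (2*k) := Real.exp_pos _
  have h2 : ∫ x in Ioi (0:ℝ), Real.exp (-x^2 - k^2/x^2) = Real.sqrt π / (2 * Real.exp (2*k)) := by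
    rw [eq_div_iff (by positivity)]
    linarith [key]
  rw [h2, show (-2*k) = -(2*k) by ring, Real.exp_neg]
  field_simp

lemma K (A B : ℝ) (hA : 0 < A) (hB : 0 < B) :
    ∫ s in Ioi (0:ℝ), s ^ (-(3:ℝ)/2) * Real.exp (-A/s - B*s)
      = Real.sqrt (π/A) * Real.exp (-2 * Real.sqrt (A*B)) := by
  set k := Real.sqrt (A*B) with hkdef
  have hk : 0 < k := Real.sqrt_pos.2 (by positivity)
  have hk2 : k^2 = A*B := Real.sq_sqrt (by positivity)
  have hderiv : ∀ x ∈ Ioi (0:ℝ), HasDerivWithinAt (fun x => A/x^2) (-(2*A/x^3)) (Ioi 0) x := by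
    intro x hx
    have hx0 : (0:ℝ) < x := hx
    have h1 : HasDerivAt (fun y : ℝ => A / y^2)
        ((0 * x^2 - A * (2 * x^1)) / (x^2)^2) x :=
      (hasDerivAt_const x A).div (hasDerivAt_pow 2 x) (by positivity)
    have h2 : (0 * x^2 - A * (2 * x^1)) / (x^2)^2 = -(2*A/x^3) := by
      field_simp; ring
    exact h2 ▸ h1.hasDerivWithinAt
  have hinj : InjOn (fun x : ℝ => A/x^2) (Ioi 0) := by
    apply StrictAntiOn.injOn
    intro x hx y hy hxy
    have hx0 : (0:ℝ) < x := hx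
    exact div_lt_div_of_pos_left hA (by positivity) (by nlinarith)
  have himg : (fun x : ℝ => A/x^2) '' Ioi 0 = Ioi 0 := by
    ext u
    constructor
    · rintro ⟨x, hx, rfl⟩
      have hx0 : (0:ℝ) < x := hx
      exact div_pos hA (by positivity)
    · intro hu
      have hu0 : (0:ℝ) < u := hu
      refine ⟨Real.sqrt (A/u), Real.sqrt_pos.2 (by positivity), ?_⟩
      simp only
      rw [Real.sq_sqrt (by positivity)]
      field_simp
  have key := integral_image_eq_integral_abs_deriv_smul measurableSet_Ioi hderiv hinj
      (fun s => s ^ (-(3:ℝ)/2) * Real.exp (-A/s - B*s))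
  rw [himg] at key
  have hrw : ∀ x ∈ Ioi (0:ℝ),
      |(-(2*A/x^3))| • ((fun s : ℝ => s ^ (-(3:ℝ)/2) * Real.exp (-A/s - B*s)) ((fun x => A/x^2) x))
        = 2 / Real.sqrt A * Real.exp (-x^2 - k^2/x^2) := by
    intro x hx
    have hx0 : (0:ℝ) < x := hx
    have ht : (0:ℝ) < A/x^2 := by positivity
    have hsA : (0:ℝ) < Real.sqrt A := Real.sqrt_pos.2 hA
    rw [abs_neg, abs_of_pos (by positivity), smul_eq_mul]
    have hpow : (A/x^2) ^ (-(3:ℝ)/2) = x^3 / (A * Real.sqrt A) := by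
      rw [show (-(3:ℝ)/2) = -((3:ℝ)/2) by ring, Real.rpow_neg ht.le]
      rw [show ((3:ℝ)/2) = 1 + (1:ℝ)/2 by norm_num, Real.rpow_add ht, Real.rpow_one,
        ← Real.sqrt_eq_rpow]
      rw [Real.sqrt_div hA.le, Real.sqrt_sq hx0.le]
      rw [eq_div_iff (by positivity)]
      field_simp
    have harg : -A/(A/x^2) - B*(A/x^2) = -x^2 - k^2/x^2 := by
      rw [hk2]; field_simp
    beta_reduce
    rw [hpow, harg]
    field_simp
  rw [setIntegral_congr_fun measurableSet_Ioi hrw] at key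
  rw [key, integral_const_mul, J k hk, Real.sqrt_div pi_pos.le]
  field_simp


theorem stmt_16 (a b t₀ q : ℝ) (ha : 0 < a) (hb : 0 < b) (ht₀ : 0 ≤ t₀) (hq : q < a/2)
    (g : ℝ → ℝ)
    (hg : ∀ y, y > t₀ → g y = (b / Real.sqrt (2*π)) * (y - t₀) ^ (-(3:ℝ)/2) *
      Real.exp (-(a*(y - t₀))/2 - b^2/(2*(y - t₀)))) :
    ∫ y in Set.Ioi t₀, g y * Real.exp (q * y)
      = Real.exp (-b * Real.sqrt (a - 2*q) + q * t₀) := by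
  have htrans : ∫ y in Ioi t₀, g y * Real.exp (q*y)
      = ∫ s in Ioi (0:ℝ), g (s+t₀) * Real.exp (q*(s+t₀)) := by
    rw [← integral_indicator measurableSet_Ioi, ← integral_indicator measurableSet_Ioi,
      ← integral_add_right_eq_self
        (fun y => (Ioi t₀).indicator (fun y => g y * Real.exp (q*y)) y) t₀]
    congr 1
    ext x
    by_cases hx : 0 < x
    · rw [indicator_of_mem (mem_Ioi.2 (by linarith)), indicator_of_mem (by simpa using hx)]
    · rw [indicator_of_notMem (by simp; linarith [le_of_not_gt hx]),
        indicator_of_notMem (by simpa using hx)]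
  rw [htrans]
  set A := b^2/2 with hAdef
  set B := a/2 - q with hBdef
  have hA : 0 < A := by positivity
  have hB : 0 < B := by simp [hBdef]; linarith
  have hrw : ∀ s ∈ Ioi (0:ℝ),
      g (s+t₀) * Real.exp (q*(s+t₀))
        = (b / Real.sqrt (2*π)) * Real.exp (q*t₀) * (s ^ (-(3:ℝ)/2) * Real.exp (-A/s - B*s)) := by
    intro s hs
    have hs0 : (0:ℝ) < s := hs
    rw [hg (s+t₀) (by linarith)]
    have h1 : s + t₀ - t₀ = s := by ring
    rw [h1]
    rw [mul_assoc, mul_assoc, ← Real.exp_add]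
    have he : -(a*s)/2 - b^2/(2*s) + q*(s+t₀) = q*t₀ + (-A/s - B*s) := by
      field_simp [hAdef, hBdef]; ring
    rw [he, Real.exp_add]
    ring
  rw [setIntegral_congr_fun measurableSet_Ioi hrw, integral_const_mul, K A B hA hB]
  have hq2 : (0:ℝ) < a - 2*q := by linarith
  have h2 : Real.sqrt (π/A) = Real.sqrt (2*π) / b := by
    rw [show π/A = (Real.sqrt (2*π)/b)^2 by
      rw [div_pow, Real.sq_sqrt (by positivity)]; field_simp [hAdef]; ring]
    exact Real.sqrt_sq (by positivity)
  have h3 : Real.sqrt (A*B) = b * Real.sqrt (a - 2*q) / 2 := by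
    rw [show A*B = (b * Real.sqrt (a - 2*q) / 2)^2 by
      rw [div_pow, mul_pow, Real.sq_sqrt hq2.le]; field_simp [hAdef, hBdef]; ring]
    exact Real.sqrt_sq (by positivity)
  rw [h2, h3, Real.exp_add]
  have hs2π : (0:ℝ) < Real.sqrt (2*π) := Real.sqrt_pos.2 (by positivity)
  rw [show -2 * (b * Real.sqrt (a - 2*q) / 2) = -b * Real.sqrt (a - 2*q) by ring]
  field_simp
end
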